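/- arXiv:2205.12661 — 3 statements merged into one kernel-verified Lean document; each statement's English description precedes it below -/
import Mathlib

section
/- Let U ⊂ ℝⁿ be open, f : U → ℝⁿ be C², and x₀ ∈ U with Df(x₀) invertible. Set M = ‖(Df(x₀))⁻¹‖, and for R > 0 with B(x₀,R) ⊂ U let K be an upper bound for ‖D²f(x)‖ on B(x₀,R). Define P = min{1/(MK), R} and P' = P(2 − MKP)/(2M). Then for every y ∈ B(f(x₀), P') there exists a unique x ∈ B(x₀, P) with f(x) = y. -/
/-!
Apply Banach's fixed point theorem to the simplified Newton map `g x = x + A⁻¹ (y - f x)`.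
Its derivative `A⁻¹ (A - Df z)` has norm at most `M K ‖z - x₀‖`, so `g` is `M K ρ`-Lipschitz on
the closed ball of radius `ρ < P ≤ 1 / (M K)`, and integrating along the segment from `x₀` gives
`‖g x - g x₀‖ ≤ M K ‖x - x₀‖² / 2`. Hence `g` maps the closed ball of radius `r` into itself as
soon as `M ‖y - f x₀‖ + M K r² / 2 ≤ r`, and such an `r < P` exists when `‖y - f x₀‖ < P'`.
Two fixed points in `B(x₀, P)` coincide because `g` is a contraction on any smaller closed ball.
-/

open Metric Set

lemma exists_radius_le_sub_sq {a L P : ℝ} (hL : 0 ≤ L) (ha : 0 ≤ a)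
    (h : a < P - L * P ^ 2 / 2) : ∃ r, 0 ≤ r ∧ r < P ∧ a + L * r ^ 2 / 2 ≤ r := by
  have hP : 0 < P := by nlinarith [sq_nonneg P]
  -- `r ↦ r - L r² / 2` loses at most `δ` between `P - δ` and `P` as long as `δ ≤ 2P`.
  set δ := min P (P - L * P ^ 2 / 2 - a)
  have hδP : δ ≤ P := min_le_left _ _
  have hδa : δ ≤ P - L * P ^ 2 / 2 - a := min_le_right _ _
  have hδ : 0 < δ := lt_min hP (by linarith)
  refine ⟨P - δ, by linarith, by linarith, ?_⟩
  nlinarith [mul_nonneg (mul_nonneg hL hδ.le) (show 0 ≤ 2 * P - δ by linarith)]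

lemma pos_of_ift_radius_pos {M K R P P' : ℝ} (hM : 0 ≤ M) (hR : 0 < R)
    (hP : P = min (1 / (M * K)) R) (hP' : P' = P * (2 - M * K * P) / (2 * M))
    (hP'pos : 0 < P') : 0 < M ∧ 0 < K := by
  rcases hM.eq_or_lt with rfl | hM
  · simp [hP'] at hP'pos
  refine ⟨hM, ?_⟩
  by_contra! hK
  rcases hK.eq_or_lt with rfl | hK
  · simp [hP, hR.le] at hP'
    linarith
  have hMK : M * K < 0 := mul_neg_of_pos_of_neg hM hK
  have hinv : 1 / (M * K) < 0 := one_div_neg.mpr hMK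
  have hPeq : P = 1 / (M * K) := by rw [hP, min_eq_left (hinv.trans hR).le]
  have hMKP : M * K * P = 1 := by rw [hPeq, mul_one_div_cancel hMK.ne]
  have : P' < 0 := by
    rw [hP', hMKP]
    exact div_neg_of_neg_of_pos (by linarith) (by positivity)
  linarith

variable {E F : Type*} [NormedAddCommGroup E] [NormedSpace ℝ E]
  [NormedAddCommGroup F] [NormedSpace ℝ F]

lemma norm_sub_le_of_norm_fderiv_le_mul_norm {g : E → F} {g' : E → E →L[ℝ] F} {x₀ x : E}
    {C : ℝ} (hg : ∀ z ∈ segment ℝ x₀ x, HasFDerivAt g (g' z) z)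
    (hg' : ∀ z ∈ segment ℝ x₀ x, ‖g' z‖ ≤ C * ‖z - x₀‖) :
    ‖g x - g x₀‖ ≤ C * ‖x - x₀‖ ^ 2 / 2 := by
  set v := x - x₀
  have hmem : ∀ t ∈ Icc (0 : ℝ) 1, x₀ + t • v ∈ segment ℝ x₀ x := fun t ht => by
    rw [segment_eq_image']
    exact ⟨t, ht, rfl⟩
  set φ : ℝ → F := fun t => g (x₀ + t • v) - g x₀
  have hφ : ∀ t ∈ Icc (0 : ℝ) 1, HasDerivAt φ (g' (x₀ + t • v) v) t := fun t ht => by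
    have hline : HasDerivAt (fun t : ℝ => x₀ + t • v) v t := by
      simpa using ((hasDerivAt_id t).smul_const v).const_add x₀
    exact ((hg _ (hmem t ht)).comp_hasDerivAt t hline).sub_const (g x₀)
  have hφ' : ∀ t ∈ Ico (0 : ℝ) 1, ‖g' (x₀ + t • v) v‖ ≤ C * ‖v‖ ^ 2 * t := fun t ht => by
    have hz := hg' _ (hmem t (Ico_subset_Icc_self ht))
    rw [add_sub_cancel_left, norm_smul, Real.norm_eq_abs, abs_of_nonneg ht.1] at hz
    calc ‖g' (x₀ + t • v) v‖ ≤ ‖g' (x₀ + t • v)‖ * ‖v‖ := (g' _).le_opNorm v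
      _ ≤ C * (t * ‖v‖) * ‖v‖ := by gcongr
      _ = C * ‖v‖ ^ 2 * t := by ring
  have hbound (t : ℝ) :
      HasDerivAt (fun t => C * ‖v‖ ^ 2 * t ^ 2 / 2) (C * ‖v‖ ^ 2 * t) t := by
    refine (((hasDerivAt_pow 2 t).const_mul (C * ‖v‖ ^ 2)).div_const 2).congr_deriv ?_
    norm_num
    ring
  have := image_norm_le_of_norm_deriv_right_le_deriv_boundary
    (fun t ht => (hφ t ht).continuousAt.continuousWithinAt)
    (fun t ht => (hφ t (Ico_subset_Icc_self ht)).hasDerivWithinAt) (by simp [φ])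
    hbound hφ' (right_mem_Icc.mpr zero_le_one)
  simpa [φ, v] using this

section FixedPoint

variable {g : E → E} {g' : E → E →L[ℝ] E} {x₀ : E} {L P : ℝ}

lemma norm_sub_le_of_mem_closedBall (hg : ∀ z ∈ ball x₀ P, HasFDerivAt g (g' z) z)
    (hg' : ∀ z ∈ ball x₀ P, ‖g' z‖ ≤ L * ‖z - x₀‖) (hL : 0 ≤ L) {ρ : ℝ} (hρ : ρ < P)
    {x₁ x₂ : E} (hx₁ : x₁ ∈ closedBall x₀ ρ) (hx₂ : x₂ ∈ closedBall x₀ ρ) :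
    ‖g x₁ - g x₂‖ ≤ L * ρ * ‖x₁ - x₂‖ := by
  have hsub : closedBall x₀ ρ ⊆ ball x₀ P := closedBall_subset_ball hρ
  refine (convex_closedBall x₀ ρ).norm_image_sub_le_of_norm_hasFDerivWithin_le
    (fun z hz => (hg z (hsub hz)).hasFDerivWithinAt) (fun z hz => ?_) hx₂ hx₁
  calc ‖g' z‖ ≤ L * ‖z - x₀‖ := hg' z (hsub hz)
    _ ≤ L * ρ := by gcongr; exact mem_closedBall_iff_norm.mp hz

lemma mul_lt_one_of_lt (hL : 0 ≤ L) (hLP : L * P ≤ 1) {ρ : ℝ} (hρ : ρ < P) : L * ρ < 1 := by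
  rcases hL.eq_or_lt with rfl | hL
  · simp
  · nlinarith

lemma exists_fixedPoint_mem_ball [CompleteSpace E]
    (hg : ∀ z ∈ ball x₀ P, HasFDerivAt g (g' z) z)
    (hg' : ∀ z ∈ ball x₀ P, ‖g' z‖ ≤ L * ‖z - x₀‖) (hL : 0 ≤ L) (hLP : L * P ≤ 1)
    (hx₀ : ‖g x₀ - x₀‖ < P - L * P ^ 2 / 2) : ∃ x ∈ ball x₀ P, g x = x := by
  obtain ⟨r, hr0, hrP, hr⟩ := exists_radius_le_sub_sq hL (norm_nonneg _) hx₀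
  have hsub : closedBall x₀ r ⊆ ball x₀ P := closedBall_subset_ball hrP
  have hmaps : MapsTo g (closedBall x₀ r) (closedBall x₀ r) := fun x hx => by
    have hxr : ‖x - x₀‖ ≤ r := mem_closedBall_iff_norm.mp hx
    have hseg : segment ℝ x₀ x ⊆ ball x₀ P :=
      ((convex_closedBall x₀ r).segment_subset (mem_closedBall_self hr0) hx).trans hsub
    have hquad : ‖g x - g x₀‖ ≤ L * ‖x - x₀‖ ^ 2 / 2 :=
      norm_sub_le_of_norm_fderiv_le_mul_norm (fun z hz => hg z (hseg hz))
        (fun z hz => hg' z (hseg hz))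
    rw [mem_closedBall_iff_norm]
    calc ‖g x - x₀‖ ≤ ‖g x - g x₀‖ + ‖g x₀ - x₀‖ := norm_sub_le_norm_sub_add_norm_sub _ _ _
      _ ≤ L * r ^ 2 / 2 + ‖g x₀ - x₀‖ := by gcongr; exact hquad.trans (by gcongr)
      _ ≤ r := by linarith
  have hcontr : ContractingWith (⟨L * r, by positivity⟩ : NNReal) (hmaps.restrict g _ _) := by
    refine ⟨mul_lt_one_of_lt hL hLP hrP, ?_⟩
    refine hmaps.lipschitzOnWith_iff_restrict.mp ?_
    refine LipschitzOnWith.of_dist_le_mul fun x₁ hx₁ x₂ hx₂ => ?_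
    rw [dist_eq_norm, dist_eq_norm]
    exact norm_sub_le_of_mem_closedBall hg hg' hL hrP hx₁ hx₂
  obtain ⟨x, hx, hfix, -⟩ := hcontr.exists_fixedPoint' isClosed_closedBall.isComplete hmaps
    (mem_closedBall_self hr0) (edist_ne_top _ _)
  exact ⟨x, hsub hx, hfix⟩

lemma eq_of_fixedPoint_mem_ball (hg : ∀ z ∈ ball x₀ P, HasFDerivAt g (g' z) z)
    (hg' : ∀ z ∈ ball x₀ P, ‖g' z‖ ≤ L * ‖z - x₀‖) (hL : 0 ≤ L) (hLP : L * P ≤ 1)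
    {x₁ x₂ : E} (hx₁ : x₁ ∈ ball x₀ P) (hx₂ : x₂ ∈ ball x₀ P) (hfix₁ : g x₁ = x₁)
    (hfix₂ : g x₂ = x₂) : x₁ = x₂ := by
  set ρ := max (dist x₁ x₀) (dist x₂ x₀)
  have hρ : ρ < P := max_lt hx₁ hx₂
  have hlip := norm_sub_le_of_mem_closedBall hg hg' hL hρ
    (mem_closedBall.mpr (le_max_left _ _)) (mem_closedBall.mpr (le_max_right _ _))
  rw [hfix₁, hfix₂] at hlip
  have hLρ := mul_lt_one_of_lt hL hLP hρ
  rw [← sub_eq_zero, ← norm_le_zero_iff]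
  nlinarith [norm_nonneg (x₁ - x₂)]

lemma existsUnique_fixedPoint_mem_ball [CompleteSpace E]
    (hg : ∀ z ∈ ball x₀ P, HasFDerivAt g (g' z) z)
    (hg' : ∀ z ∈ ball x₀ P, ‖g' z‖ ≤ L * ‖z - x₀‖) (hL : 0 ≤ L) (hLP : L * P ≤ 1)
    (hx₀ : ‖g x₀ - x₀‖ < P - L * P ^ 2 / 2) : ∃! x, x ∈ ball x₀ P ∧ g x = x := by
  obtain ⟨x, hx, hfix⟩ := exists_fixedPoint_mem_ball hg hg' hL hLP hx₀
  exact ⟨x, ⟨hx, hfix⟩, fun x' ⟨hx', hfix'⟩ =>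
    eq_of_fixedPoint_mem_ball hg hg' hL hLP hx' hx hfix' hfix⟩

end FixedPoint

section Newton

variable (A : E ≃L[ℝ] F) (f : E → F) (y : F)

/-- Simplified Newton map: the derivative is frozen to `A`. -/
def newtonStep (x : E) : E := x + A.symm (y - f x)

variable {A f y}

lemma newtonStep_eq_self_iff {x : E} : newtonStep A f y x = x ↔ f x = y := by
  rw [newtonStep, add_eq_left, map_eq_zero_iff _ A.symm.injective, sub_eq_zero, eq_comm]

lemma hasFDerivAt_newtonStep {f' : E →L[ℝ] F} {x : E} (hf : HasFDerivAt f f' x) :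
    HasFDerivAt (newtonStep A f y)
      ((A.symm : F →L[ℝ] E).comp ((A : E →L[ℝ] F) - f')) x := by
  have := (hasFDerivAt_id x).add
    ((A.symm : F →L[ℝ] E).hasFDerivAt.comp x ((hasFDerivAt_const y x).sub hf))
  refine this.congr_fderiv ?_
  ext u
  simp [sub_eq_add_neg]

end Newton

theorem existsUnique_mem_ball_eq_of_norm_fderiv_sub_le [CompleteSpace E] {f : E → F}
    {f' : E → E →L[ℝ] F} {x₀ : E} {A : E ≃L[ℝ] F} {K P : ℝ} {y : F}
    (hf : ∀ z ∈ ball x₀ P, HasFDerivAt f (f' z) z) (hA : (A : E →L[ℝ] F) = f' x₀)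
    (hf' : ∀ z ∈ ball x₀ P, ‖f' z - f' x₀‖ ≤ K * ‖z - x₀‖) (hK : 0 ≤ K)
    (hKP : ‖(A.symm : F →L[ℝ] E)‖ * K * P ≤ 1)
    (hy : ‖A.symm (y - f x₀)‖ < P - ‖(A.symm : F →L[ℝ] E)‖ * K * P ^ 2 / 2) :
    ∃! x, x ∈ ball x₀ P ∧ f x = y := by
  have hg' (z : E) (hz : z ∈ ball x₀ P) :
      ‖(A.symm : F →L[ℝ] E).comp ((A : E →L[ℝ] F) - f' z)‖ ≤
        ‖(A.symm : F →L[ℝ] E)‖ * K * ‖z - x₀‖ :=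
    calc _ ≤ ‖(A.symm : F →L[ℝ] E)‖ * ‖(A : E →L[ℝ] F) - f' z‖ :=
          ContinuousLinearMap.opNorm_comp_le _ _
      _ ≤ ‖(A.symm : F →L[ℝ] E)‖ * (K * ‖z - x₀‖) := by
        rw [hA, norm_sub_rev]; gcongr; exact hf' z hz
      _ = _ := by ring
  simpa only [newtonStep_eq_self_iff] using
    existsUnique_fixedPoint_mem_ball (fun z hz => hasFDerivAt_newtonStep (hf z hz)) hg'
      (by positivity) hKP (by simpa [newtonStep] using hy)

lemma norm_fderiv_sub_le_of_norm_fderiv_fderiv_le {f : E → F} {x₀ z : E} {R K : ℝ}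
    (hf : ContDiffOn ℝ 2 f (ball x₀ R)) (hK0 : 0 ≤ K)
    (hK : ∀ x ∈ ball x₀ R, ∀ u v : E, ‖fderiv ℝ (fderiv ℝ f) x u v‖ ≤ K * ‖u‖ * ‖v‖)
    (hz : z ∈ ball x₀ R) : ‖fderiv ℝ f z - fderiv ℝ f x₀‖ ≤ K * ‖z - x₀‖ := by
  have hdiff (x : E) (hx : x ∈ ball x₀ R) :
      HasFDerivAt (fderiv ℝ f) (fderiv ℝ (fderiv ℝ f) x) x :=
    (((hf.contDiffAt (isOpen_ball.mem_nhds hx)).fderiv_right le_rfl).differentiableAt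
      one_ne_zero).hasFDerivAt
  exact (convex_ball x₀ R).norm_image_sub_le_of_norm_hasFDerivWithin_le
    (fun x hx => (hdiff x hx).hasFDerivWithinAt)
    (fun x hx => (fderiv ℝ (fderiv ℝ f) x).opNorm_le_bound₂ hK0 (hK x hx))
    (mem_ball_self (pos_of_mem_ball hz)) hz

theorem statement_2_general {n : ℕ}
    {U : Set (Fin n → ℝ)}
    {f : (Fin n → ℝ) → (Fin n → ℝ)} (hf : ContDiffOn ℝ 2 f U)
    {x₀ : Fin n → ℝ}
    (A : (Fin n → ℝ) ≃L[ℝ] (Fin n → ℝ))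
    (hA : (A : (Fin n → ℝ) →L[ℝ] (Fin n → ℝ)) = fderiv ℝ f x₀)
    (M : ℝ) (hM : M = ‖(A.symm : (Fin n → ℝ) →L[ℝ] (Fin n → ℝ))‖)
    (R : ℝ) (hR : 0 < R) (hball : ball x₀ R ⊆ U)
    (K : ℝ)
    (hK : ∀ x ∈ ball x₀ R, ∀ u v : Fin n → ℝ,
      ‖fderiv ℝ (fderiv ℝ f) x u v‖ ≤ K * ‖u‖ * ‖v‖)
    (P P' : ℝ) (hP : P = min (1 / (M * K)) R)
    (hP' : P' = P * (2 - M * K * P) / (2 * M)) :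
    ∀ y ∈ ball (f x₀) P', ∃! x, x ∈ ball x₀ P ∧ f x = y := by
  intro y hy
  obtain ⟨hMpos, hKpos⟩ :=
    pos_of_ift_radius_pos (hM ▸ norm_nonneg _) hR hP hP' (pos_of_mem_ball hy)
  have hPR : ball x₀ P ⊆ ball x₀ R := ball_subset_ball (hP ▸ min_le_right _ _)
  have hMKP : M * K * P ≤ 1 :=
    calc M * K * P ≤ M * K * (1 / (M * K)) := by rw [hP]; gcongr; exact min_le_left _ _
      _ = 1 := by field_simp
  have hMP' : M * P' = P - M * K * P ^ 2 / 2 := by rw [hP']; field_simp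
  have hfR : ContDiffOn ℝ 2 f (ball x₀ R) := hf.mono hball
  refine existsUnique_mem_ball_eq_of_norm_fderiv_sub_le
    (fun z hz => ((hfR.contDiffAt (isOpen_ball.mem_nhds (hPR hz))).differentiableAt
      two_ne_zero).hasFDerivAt) hA
    (fun z hz => norm_fderiv_sub_le_of_norm_fderiv_fderiv_le hfR hKpos.le hK (hPR hz))
    hKpos.le (hM ▸ hMKP) ?_
  calc _ ≤ M * ‖y - f x₀‖ := hM ▸ (A.symm : (Fin n → ℝ) →L[ℝ] (Fin n → ℝ)).le_opNorm _
    _ < M * P' := by gcongr; exact mem_ball_iff_norm.mp hy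
    _ = _ := hM ▸ hMP'

/-- Quantitative inverse function theorem for `C²` maps (Corollary 3.5 of the paper):
with `P = min (1/(M K)) R` and `P' = P(2 - MKP)/(2M)`, every `y ∈ B(f x₀, P')` has a
unique preimage in `B(x₀, P)`. -/
theorem statement_2 {n : ℕ}
    {U : Set (Fin n → ℝ)} (hU : IsOpen U)
    {f : (Fin n → ℝ) → (Fin n → ℝ)} (hf : ContDiffOn ℝ 2 f U)
    {x₀ : Fin n → ℝ} (hx₀ : x₀ ∈ U)
    (A : (Fin n → ℝ) ≃L[ℝ] (Fin n → ℝ))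
    (hA : (A : (Fin n → ℝ) →L[ℝ] (Fin n → ℝ)) = fderiv ℝ f x₀)
    (M : ℝ) (hM : M = ‖(A.symm : (Fin n → ℝ) →L[ℝ] (Fin n → ℝ))‖)
    (R : ℝ) (hR : 0 < R) (hball : ball x₀ R ⊆ U)
    (K : ℝ)
    (hK : ∀ x ∈ ball x₀ R, ∀ u v : Fin n → ℝ,
      ‖fderiv ℝ (fderiv ℝ f) x u v‖ ≤ K * ‖u‖ * ‖v‖)
    (P P' : ℝ) (hP : P = min (1 / (M * K)) R)
    (hP' : P' = P * (2 - M * K * P) / (2 * M)) :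
    ∀ y ∈ ball (f x₀) P', ∃! x, x ∈ ball x₀ P ∧ f x = y :=
  statement_2_general hf A hA M hM R hR hball K hK P P' hP hP'
end

section
/- Let f : U × V → ℝᵐ be C¹ on open sets U ⊂ ℝⁿ, V ⊂ ℝᵐ with ∂f/∂y(x₀,y₀) invertible. Set M_y = ‖(∂f/∂y(x₀,y₀))⁻¹‖, L_x = ‖∂f/∂x(x₀,y₀)‖, and define K_x(r_x) = sup{‖∂f/∂x(x,y₀) − ∂f/∂x(x₀,y₀)‖ : x ∈ B(x₀,r_x)} and K_y(r_x,r_y) = sup{‖∂f/∂y(x,y) − ∂f/∂y(x₀,y₀)‖ : (x,y) ∈ B(x₀,r_x) × B(y₀,r_y)}. If r_x, r_y > 0 satisfy K_x(r_x) r_x + K_y(r_x,r_y) r_y < r_y/M_y − L_x r_x and M_y K_y(r_x,r_y) < 1, then for each x ∈ B(x₀,r_x) there is a unique y_x ∈ B(y₀,r_y) with f(x,y_x) = f(x₀,y₀). -/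
/-!
For fixed `x`, the slice `y ↦ f (x, y)` stays within `K_y` of the invertible linear map
`A = ∂f/∂y (x₀, y₀)` on `B(y₀, r_y)`, by the mean value inequality. Since `M_y K_y < 1`, such a
map is injective there and, by the contraction argument behind the inverse function theorem,
covers the ball of radius `(M_y⁻¹ - K_y) r_y` around `f (x, y₀)`. The first inequality of the
hypotheses says exactly that `f (x₀, y₀)` lies in that ball, since moving `x` from `x₀` changes
`f (·, y₀)` by at most `(L_x + K_x) r_x`.
-/

open Metric ContinuousLinearMap
open scoped NNReal

theorem ApproximatesLinearOn.existsUnique_mem_ball_apply_eq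
    {𝕜 E F : Type*} [NontriviallyNormedField 𝕜] [NormedAddCommGroup E] [NormedSpace 𝕜 E]
    [CompleteSpace E] [NormedAddCommGroup F] [NormedSpace 𝕜 F]
    {f : E → F} {f' : E ≃L[𝕜] F} {c : ℝ≥0} {b : E} {R : ℝ}
    (hf : ApproximatesLinearOn f (f' : E →L[𝕜] F) (ball b R) c)
    (hc : c < ‖(f'.symm : F →L[𝕜] E)‖₊⁻¹) {y : F}
    (hy : dist y (f b) < (‖(f'.symm : F →L[𝕜] E)‖⁻¹ - c) * R) :
    ∃! x, x ∈ ball b R ∧ f x = y := by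
  have hgap : 0 < ‖(f'.symm : F →L[𝕜] E)‖⁻¹ - c := by
    rw [sub_pos, ← coe_nnnorm, ← NNReal.coe_inv, NNReal.coe_lt_coe]
    exact hc
  set ε := dist y (f b) / (‖(f'.symm : F →L[𝕜] E)‖⁻¹ - c)
  have hεR : ε < R := (div_lt_iff₀' hgap).2 hy
  have hsub : closedBall b ε ⊆ ball b R := closedBall_subset_ball hεR
  obtain ⟨x, hx, rfl⟩ := hf.surjOn_closedBall_of_nonlinearRightInverse
    f'.toNonlinearRightInverse (by positivity) hsub (by
      rw [mem_closedBall, ContinuousLinearEquiv.toNonlinearRightInverse, coe_nnnorm,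
        mul_div_cancel₀ _ hgap.ne'])
  exact ⟨x, ⟨hsub hx, rfl⟩, fun x' hx' => hf.injOn (Or.inr hc) hx'.1 (hsub hx) hx'.2⟩

theorem approximatesLinearOn_of_norm_hasFDerivWithinAt_sub_le
    {E F : Type*} [NormedAddCommGroup E] [NormedSpace ℝ E] [NormedAddCommGroup F] [NormedSpace ℝ F]
    {f : E → F} {f' : E → E →L[ℝ] F} {A : E →L[ℝ] F} {s : Set E} {c : ℝ≥0}
    (hs : Convex ℝ s) (hf : ∀ x ∈ s, HasFDerivWithinAt f (f' x) s x)
    (hc : ∀ x ∈ s, ‖f' x - A‖ ≤ c) :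
    ApproximatesLinearOn f A s c :=
  fun _ hx _ hy => hs.norm_image_sub_le_of_norm_hasFDerivWithin_le' hf hc hy hx

theorem statement_6_general {n m : ℕ}
    {U : Set (Fin n → ℝ)} {V : Set (Fin m → ℝ)} (hU : IsOpen U) (hV : IsOpen V)
    {f : (Fin n → ℝ) × (Fin m → ℝ) → (Fin m → ℝ)}
    (hf : ContDiffOn ℝ 1 f (U ×ˢ V))
    {x₀ : Fin n → ℝ} {y₀ : Fin m → ℝ} (hy₀ : y₀ ∈ V)
    (A : (Fin m → ℝ) ≃L[ℝ] (Fin m → ℝ))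
    (hA : (A : (Fin m → ℝ) →L[ℝ] (Fin m → ℝ)) =
      (fderiv ℝ f (x₀, y₀)).comp (inr ℝ (Fin n → ℝ) (Fin m → ℝ)))
    (My Lx : ℝ)
    (hMy : My = ‖(A.symm : (Fin m → ℝ) →L[ℝ] (Fin m → ℝ))‖)
    (hLx : Lx = ‖(fderiv ℝ f (x₀, y₀)).comp (inl ℝ (Fin n → ℝ) (Fin m → ℝ))‖)
    (rx ry : ℝ) (hrx : 0 < rx) (hry : 0 < ry)
    (hballx : ball x₀ rx ⊆ U) (hbally : ball y₀ ry ⊆ V)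
    (Kx Ky : ℝ)
    (hKx : ∀ x ∈ ball x₀ rx,
      ‖(fderiv ℝ f (x, y₀)).comp (inl ℝ (Fin n → ℝ) (Fin m → ℝ)) -
        (fderiv ℝ f (x₀, y₀)).comp (inl ℝ (Fin n → ℝ) (Fin m → ℝ))‖ ≤ Kx)
    (hKy : ∀ p ∈ ball x₀ rx ×ˢ ball y₀ ry,
      ‖(fderiv ℝ f p).comp (inr ℝ (Fin n → ℝ) (Fin m → ℝ)) -
        (fderiv ℝ f (x₀, y₀)).comp (inr ℝ (Fin n → ℝ) (Fin m → ℝ))‖ ≤ Ky)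
    (hineq1 : Kx * rx + Ky * ry < ry / My - Lx * rx)
    (hineq2 : My * Ky < 1) :
    ∀ x ∈ ball x₀ rx, ∃! y, y ∈ ball y₀ ry ∧ f (x, y) = f (x₀, y₀) := by
  intro x hx
  have hderiv : ∀ p ∈ U ×ˢ V, HasFDerivAt f (fderiv ℝ f p) p := fun p hp =>
    ((hf.differentiableOn one_ne_zero).differentiableAt ((hU.prod hV).mem_nhds hp)).hasFDerivAt
  have hLx0 : 0 ≤ Lx := hLx ▸ norm_nonneg _
  have hKx0 : 0 ≤ Kx := (norm_nonneg _).trans (hKx x hx)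
  have hKy0 : 0 ≤ Ky := (norm_nonneg _).trans (hKy (x, y₀) ⟨hx, mem_ball_self hry⟩)
  have hMy0 : 0 < My := by
    refine (hMy ▸ norm_nonneg _ : 0 ≤ My).lt_of_ne' fun h => ?_
    rw [h, div_zero] at hineq1
    linarith [mul_nonneg hKx0 hrx.le, mul_nonneg hKy0 hry.le, mul_nonneg hLx0 hrx.le]
  have hslice_y : ApproximatesLinearOn (fun y => f (x, y))
      (A : (Fin m → ℝ) →L[ℝ] (Fin m → ℝ)) (ball y₀ ry) Ky.toNNReal :=
    approximatesLinearOn_of_norm_hasFDerivWithinAt_sub_le (convex_ball y₀ ry)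
      (fun y hy => ((hderiv (x, y) ⟨hballx hx, hbally hy⟩).comp y
        (hasFDerivAt_prodMk_right x y)).hasFDerivWithinAt)
      (fun y hy => hA ▸ (hKy (x, y) ⟨hx, hy⟩).trans (Real.le_coe_toNNReal Ky))
  have hslice_x : ‖f (x, y₀) - f (x₀, y₀)‖ ≤ (Lx + Kx) * ‖x - x₀‖ :=
    (convex_ball x₀ rx).norm_image_sub_le_of_norm_hasFDerivWithin_le
      (fun z hz => ((hderiv (z, y₀) ⟨hballx hz, hy₀⟩).comp z
        (hasFDerivAt_prodMk_left z y₀)).hasFDerivWithinAt)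
      (fun z hz => hLx ▸ (norm_le_insert' _ _).trans (add_le_add_right (hKx z hz) _))
      (mem_ball_self hrx) hx
  refine hslice_y.existsUnique_mem_ball_apply_eq ?_ ?_
  · rw [← NNReal.coe_lt_coe, NNReal.coe_inv, coe_nnnorm, ← hMy, Real.coe_toNNReal _ hKy0,
      ← mul_one My⁻¹, lt_inv_mul_iff₀ hMy0]
    exact hineq2
  · rw [← hMy, Real.coe_toNNReal _ hKy0, dist_comm, dist_eq_norm]
    rw [div_eq_inv_mul] at hineq1
    calc ‖f (x, y₀) - f (x₀, y₀)‖ ≤ (Lx + Kx) * ‖x - x₀‖ := hslice_x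
      _ ≤ (Lx + Kx) * rx := by gcongr; exact (mem_ball_iff_norm.1 hx).le
      _ < (My⁻¹ - Ky) * ry := by linarith

/-- Quantitative implicit function theorem for `C¹` maps (Corollary 3.8 of the paper),
with bounds `K_x, K_y` on the moduli of continuity of the first partial derivatives. -/
theorem statement_6 {n m : ℕ}
    {U : Set (Fin n → ℝ)} {V : Set (Fin m → ℝ)} (hU : IsOpen U) (hV : IsOpen V)
    {f : (Fin n → ℝ) × (Fin m → ℝ) → (Fin m → ℝ)}
    (hf : ContDiffOn ℝ 1 f (U ×ˢ V))
    {x₀ : Fin n → ℝ} {y₀ : Fin m → ℝ} (hx₀ : x₀ ∈ U) (hy₀ : y₀ ∈ V)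
    (A : (Fin m → ℝ) ≃L[ℝ] (Fin m → ℝ))
    (hA : (A : (Fin m → ℝ) →L[ℝ] (Fin m → ℝ)) =
      (fderiv ℝ f (x₀, y₀)).comp (inr ℝ (Fin n → ℝ) (Fin m → ℝ)))
    (My Lx : ℝ)
    (hMy : My = ‖(A.symm : (Fin m → ℝ) →L[ℝ] (Fin m → ℝ))‖)
    (hLx : Lx = ‖(fderiv ℝ f (x₀, y₀)).comp (inl ℝ (Fin n → ℝ) (Fin m → ℝ))‖)
    (rx ry : ℝ) (hrx : 0 < rx) (hry : 0 < ry)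
    (hballx : ball x₀ rx ⊆ U) (hbally : ball y₀ ry ⊆ V)
    (Kx Ky : ℝ)
    (hKx : ∀ x ∈ ball x₀ rx,
      ‖(fderiv ℝ f (x, y₀)).comp (inl ℝ (Fin n → ℝ) (Fin m → ℝ)) -
        (fderiv ℝ f (x₀, y₀)).comp (inl ℝ (Fin n → ℝ) (Fin m → ℝ))‖ ≤ Kx)
    (hKy : ∀ p ∈ ball x₀ rx ×ˢ ball y₀ ry,
      ‖(fderiv ℝ f p).comp (inr ℝ (Fin n → ℝ) (Fin m → ℝ)) -
        (fderiv ℝ f (x₀, y₀)).comp (inr ℝ (Fin n → ℝ) (Fin m → ℝ))‖ ≤ Ky)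
    (hineq1 : Kx * rx + Ky * ry < ry / My - Lx * rx)
    (hineq2 : My * Ky < 1) :
    ∀ x ∈ ball x₀ rx, ∃! y, y ∈ ball y₀ ry ∧ f (x, y) = f (x₀, y₀) :=
  statement_6_general hU hV hf hy₀ A hA My Lx hMy hLx rx ry hrx hry hballx hbally Kx Ky hKx hKy
    hineq1 hineq2
end

section
/- Let f(A,P) = AᵀP + PA + Q − P B R⁻¹ Bᵀ P, defined on pairs of an n×n matrix A and a symmetric n×n matrix P, with fixed Q positive semidefinite and R positive definite. Then the partial derivative of f with respect to P at (A₀,P₀) is the linear map μ ↦ A_cᵀ μ + μ A_c, where A_c = A₀ − B R⁻¹ Bᵀ P₀; in particular if A_c is Hurwitz this partial derivative is an isomorphism of the space of symmetric matrices. -/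
/-!
Differentiating the quadratic term `P K P` gives `μ K P₀ + P₀ K μ`, and since `K = B R⁻¹ Bᵀ` and
`P₀` are symmetric the whole derivative collapses to the Lyapunov operator
`μ ↦ A_cᵀ μ + μ A_c`. If `A_cᵀ μ = μ (-A_c)`, then `p(A_cᵀ) μ = μ p(-A_c)` for every polynomial `p`;
taking `p` the characteristic polynomial of `A_cᵀ` kills the left side, while `p(-A_c)` is invertible
because `A_c` and `-A_c` have disjoint spectra when `A_c` is Hurwitz. So the operator is injective,
hence bijective, and it commutes with transposition, so it restricts to a bijection of the
symmetric matrices.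
-/

open Matrix Polynomial

attribute [local instance] Matrix.normedAddCommGroup Matrix.normedSpace

theorem SemiconjBy.aeval {R A : Type*} [CommSemiring R] [Semiring A] [Algebra R A] {x a b : A}
    (h : SemiconjBy x a b) (p : R[X]) : SemiconjBy x (aeval a p) (aeval b p) := by
  induction p using Polynomial.induction_on' with
  | add p q hp hq => simpa only [map_add] using hp.add_right hq
  | monomial k r =>
    simpa only [aeval_monomial] using
      SemiconjBy.mul_right (Algebra.commute_algebraMap_right r x) (h.pow_right k)

namespace Matrix

variable {n : Type*} [Fintype n]

section Spectrum

variable [DecidableEq n]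

theorem spectrum_transpose {K : Type*} [Field K] (A : Matrix n n K) :
    spectrum K Aᵀ = spectrum K A := by
  ext z
  simp only [mem_spectrum_iff_isRoot_charpoly, charpoly_transpose]

theorem eq_zero_of_mul_eq_mul_of_disjoint_spectrum {K : Type*} [Field K] [IsAlgClosed K]
    {a b x : Matrix n n K} (hab : Disjoint (spectrum K a) (spectrum K b)) (h : a * x = x * b) :
    x = 0 := by
  rcases isEmpty_or_nonempty n with hn | hn
  · exact Subsingleton.elim _ _
  have hunit : IsUnit (aeval b a.charpoly) := by
    by_contra hnu
    have hdeg : 0 < a.charpoly.degree := by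
      rw [charpoly_degree_eq_dim]
      exact_mod_cast Fintype.card_pos
    obtain ⟨z, hzb, hza⟩ : (0 : K) ∈ (fun z => a.charpoly.eval z) '' spectrum K b := by
      rw [← spectrum.map_polynomial_aeval_of_degree_pos b _ hdeg]
      exact (spectrum.zero_mem_iff K).mpr hnu
    exact hab.notMem_of_mem_right hzb (mem_spectrum_iff_isRoot_charpoly.mpr hza)
  have hx : x * aeval b a.charpoly = 0 := by
    rw [((show SemiconjBy x b a from h.symm).aeval a.charpoly).eq, aeval_self_charpoly, zero_mul]
  exact hunit.mul_left_eq_zero.mp hx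

end Spectrum

section Calculus

variable {𝕜 : Type*} [NontriviallyNormedField 𝕜] [CompleteSpace 𝕜] {l m : Type*} [Fintype l]
  [Fintype m]

/-- The entrywise sup norm is not submultiplicative, so matrices are not a normed ring here and
`HasFDerivAt.mul'` is unavailable; continuity of the product comes from finite dimensionality. -/
noncomputable def mulCLM : Matrix l m 𝕜 →L[𝕜] Matrix m n 𝕜 →L[𝕜] Matrix l n 𝕜 :=
  LinearMap.toContinuousLinearMap
    (LinearMap.toContinuousLinearMap.toLinearMap ∘ₗ mulLinearMap 𝕜)

@[simp]
theorem mulCLM_apply (X : Matrix l m 𝕜) (Y : Matrix m n 𝕜) : mulCLM X Y = X * Y := rfl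

theorem hasFDerivAt_mul_mul_self (K : Matrix n m 𝕜) (P₀ : Matrix m n 𝕜) :
    HasFDerivAt (fun P : Matrix m n 𝕜 => P * K * P)
      (mulCLM (P₀ * K) + (mulCLM (l := m)).flip (K * P₀)) P₀ := by
  refine (mulCLM.hasFDerivAt_of_bilinear ((mulCLM (l := m)).flip K).hasFDerivAt
    (hasFDerivAt_id P₀)).congr_fderiv ?_
  ext X : 1
  change P₀ * K * X + X * K * P₀ = P₀ * K * X + X * (K * P₀)
  rw [Matrix.mul_assoc X]

noncomputable def lyapunovCLM (A : Matrix n n 𝕜) : Matrix n n 𝕜 →L[𝕜] Matrix n n 𝕜 :=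
  mulCLM Aᵀ + (mulCLM (l := n)).flip A

@[simp]
theorem lyapunovCLM_apply (A X : Matrix n n 𝕜) : lyapunovCLM A X = Aᵀ * X + X * A := rfl

theorem lyapunovCLM_transpose (A X : Matrix n n 𝕜) :
    lyapunovCLM A Xᵀ = (lyapunovCLM A X)ᵀ := by
  simp only [lyapunovCLM_apply, transpose_add, transpose_mul, transpose_transpose, add_comm]

theorem hasFDerivAt_riccati (A Q K P₀ : Matrix n n 𝕜) (hK : K.IsSymm) (hP₀ : P₀.IsSymm) :
    HasFDerivAt (fun P : Matrix n n 𝕜 => Aᵀ * P + P * A + Q - P * K * P)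
      (lyapunovCLM (A - K * P₀)) P₀ := by
  have hlin : HasFDerivAt (fun P : Matrix n n 𝕜 => Aᵀ * P + P * A) (lyapunovCLM A) P₀ :=
    (lyapunovCLM A).hasFDerivAt
  refine ((hlin.add_const Q).sub (hasFDerivAt_mul_mul_self K P₀)).congr_fderiv ?_
  ext X : 1
  change Aᵀ * X + X * A - (P₀ * K * X + X * (K * P₀)) = (A - K * P₀)ᵀ * X + X * (A - K * P₀)
  rw [transpose_sub, transpose_mul, hK.eq, hP₀.eq, Matrix.sub_mul, Matrix.mul_sub]
  abel

end Calculus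

theorem bijOn_isSymm_of_injective {K : Type*} [Field K] (Φ : Matrix n n K →ₗ[K] Matrix n n K)
    (hΦ : Function.Injective Φ) (hΦT : ∀ X, Φ Xᵀ = (Φ X)ᵀ) :
    Set.BijOn Φ {X | X.IsSymm} {X | X.IsSymm} := by
  refine ⟨fun X hX => ?_, hΦ.injOn, fun Y hY => ?_⟩
  · change (Φ X)ᵀ = Φ X
    rw [← hΦT, hX.eq]
  · obtain ⟨X, rfl⟩ := LinearMap.injective_iff_surjective.mp hΦ Y
    exact ⟨X, hΦ (by rw [hΦT, hY.eq]), rfl⟩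

variable [DecidableEq n]

def IsHurwitz (A : Matrix n n ℝ) : Prop :=
  ∀ z ∈ spectrum ℂ (A.map Complex.ofReal), z.re < 0

theorem IsHurwitz.injective_lyapunovCLM {A : Matrix n n ℝ} (hA : A.IsHurwitz) :
    Function.Injective (lyapunovCLM A) := by
  refine (injective_iff_map_eq_zero (lyapunovCLM A)).mpr fun X hX => ?_
  rw [lyapunovCLM_apply] at hX
  set C := A.map Complex.ofReal
  have hdisj : Disjoint (spectrum ℂ Cᵀ) (spectrum ℂ (-C)) := by
    rw [spectrum_transpose, ← spectrum.neg_eq, Set.disjoint_left]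
    intro z hz hz'
    have hre := hA z hz
    have hre' := hA (-z) (Set.mem_neg.mp hz')
    rw [Complex.neg_re] at hre'
    linarith
  have hX' : Cᵀ * X.map Complex.ofReal = X.map Complex.ofReal * -C := by
    have := congrArg Complex.ofRealHom.mapMatrix hX
    rw [map_add, map_mul, map_mul, map_zero] at this
    rw [mul_neg, eq_neg_iff_add_eq_zero]
    exact this
  have := eq_zero_of_mul_eq_mul_of_disjoint_spectrum hdisj hX'
  exact Matrix.map_injective Complex.ofReal_injective (by simpa using this)

end Matrix

theorem statement_14_general {n m : ℕ}
    (Q : Matrix (Fin n) (Fin n) ℝ)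
    (R : Matrix (Fin m) (Fin m) ℝ) (hR : R.PosDef)
    (B : Matrix (Fin n) (Fin m) ℝ)
    (A₀ P₀ : Matrix (Fin n) (Fin n) ℝ) (hP₀ : P₀.IsSymm)
    (Ac : Matrix (Fin n) (Fin n) ℝ) (hAc : Ac = A₀ - B * R⁻¹ * Bᵀ * P₀)
    (Φ : Matrix (Fin n) (Fin n) ℝ →L[ℝ] Matrix (Fin n) (Fin n) ℝ)
    (hΦ : ∀ μ, Φ μ = Acᵀ * μ + μ * Ac) :
    HasFDerivAt (fun P : Matrix (Fin n) (Fin n) ℝ =>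
      A₀ᵀ * P + P * A₀ + Q - P * B * R⁻¹ * Bᵀ * P) Φ P₀ ∧
    ((∀ μ ∈ spectrum ℂ (Ac.map (Complex.ofReal)), μ.re < 0) →
      Set.BijOn (⇑Φ) {μ : Matrix (Fin n) (Fin n) ℝ | μ.IsSymm}
        {v : Matrix (Fin n) (Fin n) ℝ | v.IsSymm}) := by
  obtain rfl : Φ = lyapunovCLM Ac := ContinuousLinearMap.ext hΦ
  have hK : (B * R⁻¹ * Bᵀ).IsSymm := by
    have hRinv : R⁻¹.IsSymm := (isHermitian_iff_isSymm.mp hR.isHermitian).inv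
    rw [IsSymm, transpose_mul, transpose_mul, hRinv.eq, transpose_transpose, Matrix.mul_assoc]
  refine ⟨?_, fun hHurwitz => ?_⟩
  · rw [hAc]
    simpa only [Matrix.mul_assoc] using hasFDerivAt_riccati A₀ Q _ P₀ hK hP₀
  · exact bijOn_isSymm_of_injective (lyapunovCLM Ac).toLinearMap
      (IsHurwitz.injective_lyapunovCLM hHurwitz) (lyapunovCLM_transpose Ac)

/-- The partial derivative in `P` of the Riccati map
`f(A,P) = AᵀP + PA + Q − P B R⁻¹ Bᵀ P` at `(A₀, P₀)` (with `P₀` symmetric) is the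
Lyapunov map `μ ↦ A_cᵀ μ + μ A_c` where `A_c = A₀ − B R⁻¹ Bᵀ P₀`; if `A_c` is Hurwitz
this map is an isomorphism of the space of symmetric matrices. -/
theorem statement_14 {n m : ℕ}
    (Q : Matrix (Fin n) (Fin n) ℝ) (hQ : Q.PosSemidef)
    (R : Matrix (Fin m) (Fin m) ℝ) (hR : R.PosDef)
    (B : Matrix (Fin n) (Fin m) ℝ)
    (A₀ P₀ : Matrix (Fin n) (Fin n) ℝ) (hP₀ : P₀.IsSymm)
    (Ac : Matrix (Fin n) (Fin n) ℝ) (hAc : Ac = A₀ - B * R⁻¹ * Bᵀ * P₀)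
    (Φ : Matrix (Fin n) (Fin n) ℝ →L[ℝ] Matrix (Fin n) (Fin n) ℝ)
    (hΦ : ∀ μ, Φ μ = Acᵀ * μ + μ * Ac) :
    HasFDerivAt (fun P : Matrix (Fin n) (Fin n) ℝ =>
      A₀ᵀ * P + P * A₀ + Q - P * B * R⁻¹ * Bᵀ * P) Φ P₀ ∧
    ((∀ μ ∈ spectrum ℂ (Ac.map (Complex.ofReal)), μ.re < 0) →
      Set.BijOn (⇑Φ) {μ : Matrix (Fin n) (Fin n) ℝ | μ.IsSymm}
        {v : Matrix (Fin n) (Fin n) ℝ | v.IsSymm}) :=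
  statement_14_general Q R hR B A₀ P₀ hP₀ Ac hAc Φ hΦ
end
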